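/- Let P be a finite poset. If the incomparability orthoset (P, ⊥) is not Dacey, then P contains an N, i.e., there exist a, b, c, d ∈ P with a < c, b ⋖ c, b < d, and all other distinct pairs among {a,b,c,d} incomparable. -/

import Mathlib

/-- The orthocomplement of a subset in an orthoset `(O, r)`. -/
def perp {O : Type*} (r : O → O → Prop) (X : Set O) : Set O :=
  {y | ∀ x ∈ X, r y x}

/-- Incomparability relation of a poset. -/
def incomp {P : Type*} [PartialOrder P] (x y : P) : Prop := ¬ x ≤ y ∧ ¬ y ≤ x

/-- A basis of `X` is a maximal pairwise orthogonal subset of `X`. -/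
def IsBasis {O : Type*} (r : O → O → Prop) (X B : Set O) : Prop :=
  B ⊆ X ∧ B.Pairwise r ∧ ∀ C : Set O, B ⊆ C → C ⊆ X → C.Pairwise r → C = B

/-- The orthoset is Dacey: every orthoclosed set equals the double
orthocomplement of each of its bases. -/
def IsDacey {O : Type*} (r : O → O → Prop) : Prop :=
  ∀ X : Set O, X = perp r (perp r X) →
    ∀ B : Set O, IsBasis r X B → X = perp r (perp r B)

/-- `(a,b,c,d)` form an N. -/
def FormN {P : Type*} [PartialOrder P] (a b c d : P) : Prop :=
  a < c ∧ b ⋖ c ∧ b < d ∧ incomp a b ∧ incomp a d ∧ incomp c d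

/-!
Let `X` be orthoclosed with a basis `B` such that `B^⊥⊥ ⊊ X`. Then some `x ∈ X` is comparable
to some `y ∈ B^⊥`, and `y ∉ X` by maximality of `B`; up to duality `y < x`. Climbing from `y`
to `x` we cross from the complement of `X` into `X` along a cover `m ⋖ x'`. As `m ∉ X^⊥⊥`,
some `w ∈ X^⊥` lies above `m`, and by maximality of `B` some `b ∈ B` lies below `x'`; then
`b, m, x', w` form an N.
-/

section Orthoset

variable {O : Type*} {r : O → O → Prop} {X Y B : Set O}

theorem perp_anti (h : X ⊆ Y) : perp r Y ⊆ perp r X :=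
  fun _ hy x hx => hy x (h hx)

theorem perp_perp_subset (hX : X = perp r (perp r X)) (hB : B ⊆ X) :
    perp r (perp r B) ⊆ X :=
  hX ▸ perp_anti (perp_anti hB)

theorem IsBasis.exists_not_rel [Std.Symm r] (hB : IsBasis r X B) {x : O} (hx : x ∈ X)
    (hxB : x ∉ B) : ∃ b ∈ B, ¬ r x b := by
  by_contra! hall
  have hins : insert x B = B := by
    refine hB.2.2 _ (Set.subset_insert _ _) (Set.insert_subset hx hB.1) ?_
    exact hB.2.1.insert fun b hb _ => ⟨hall b hb, Std.Symm.symm _ _ (hall b hb)⟩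
  exact hxB (hins ▸ Set.mem_insert x B)

theorem IsBasis.notMem_of_mem_perp [Std.Symm r] [Std.Irrefl r] (hB : IsBasis r X B) {y : O}
    (hy : y ∈ perp r B) : y ∉ X := fun hyX => by
  by_cases hyB : y ∈ B
  · exact Std.Irrefl.irrefl y (hy y hyB)
  · obtain ⟨b, hb, hyb⟩ := hB.exists_not_rel hyX hyB
    exact hyb (hy b hb)

end Orthoset

section Incomp

variable {P : Type*} [PartialOrder P]

instance : Std.Symm (incomp (P := P)) := ⟨fun _ _ h => ⟨h.2, h.1⟩⟩

instance : Std.Irrefl (incomp (P := P)) := ⟨fun _ h => h.1 le_rfl⟩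

theorem incomp_orderDual : incomp (P := Pᵒᵈ) = incomp (P := P) :=
  funext₂ fun _ _ => propext and_comm

theorem lt_of_not_incomp {a b : P} (h : ¬ incomp a b) (hba : ¬ b ≤ a) : a < b :=
  lt_of_le_not_ge (by_contra fun hab => h ⟨hab, hba⟩) hba

theorem FormN.ofDual {a b c d : Pᵒᵈ} (h : FormN a b c d) :
    FormN (P := P) (OrderDual.ofDual d) (OrderDual.ofDual c)
      (OrderDual.ofDual b) (OrderDual.ofDual a) := by
  obtain ⟨hac, hbc, hbd, hab, had, hcd⟩ := h
  rw [incomp_orderDual] at hab had hcd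
  exact ⟨hbd, hbc.ofDual, hac, Std.Symm.symm _ _ hcd, Std.Symm.symm _ _ had,
    Std.Symm.symm _ _ hab⟩

end Incomp

theorem exists_le_covBy_notMem_mem {P : Type*} [PartialOrder P] [WellFoundedLT P]
    [IsStronglyCoatomic P] {S : Set P} {x y : P} (hy : y ∉ S) (hx : x ∈ S) (hyx : y ≤ x) :
    ∃ m x', y ≤ m ∧ m ⋖ x' ∧ m ∉ S ∧ x' ∈ S := by
  obtain ⟨x', ⟨hx'S, hyx'⟩, hmin⟩ :=
    wellFounded_lt.has_min {t | t ∈ S ∧ y ≤ t} ⟨x, hx, hyx⟩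
  obtain ⟨m, hym, hmx'⟩ :=
    exists_le_covBy_of_lt (lt_of_le_of_ne hyx' (ne_of_mem_of_not_mem hx'S hy).symm)
  exact ⟨m, x', hym, hmx', fun hmS => hmin m ⟨hmS, hym⟩ hmx'.lt, hx'S⟩

section Dacey

variable {P : Type*} [PartialOrder P] {X B : Set P}

theorem exists_formN_of_covBy (hX : X = perp incomp (perp incomp X))
    (hB : IsBasis incomp X B) {y m x : P} (hy : y ∈ perp incomp B) (hym : y ≤ m) (hmx : m ⋖ x)
    (hm : m ∉ X) (hx : x ∈ X) : ∃ a b c d : P, FormN a b c d := by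
  obtain ⟨w, hw, hmw⟩ : ∃ w ∈ perp incomp X, ¬ incomp m w := by
    rw [hX] at hm
    simpa [perp] using hm
  have hwx : incomp w x := hw x hx
  have hmw : m < w := lt_of_not_incomp hmw fun hwm => hwx.1 (hwm.trans hmx.le)
  have hxB : x ∉ B := fun hxB => (hy x hxB).1 (hym.trans hmx.le)
  obtain ⟨b, hbB, hxb⟩ := hB.exists_not_rel hx hxB
  have hbx : b < x := lt_of_not_incomp (fun h => hxb (Std.Symm.symm _ _ h))
    fun hxb => (hy b hbB).1 (hym.trans (hmx.le.trans hxb))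
  have hwb : incomp w b := hw b (hB.1 hbB)
  refine ⟨b, m, x, w, hbx, hmx, hmw, ?_, Std.Symm.symm _ _ hwb, Std.Symm.symm _ _ hwx⟩
  exact ⟨fun hbm => hwb.2 (hbm.trans hmw.le), fun hmb => (hy b hbB).1 (hym.trans hmb)⟩

theorem exists_formN_of_le [Finite P] (hX : X = perp incomp (perp incomp X))
    (hB : IsBasis incomp X B) {y x : P} (hy : y ∈ perp incomp B) (hx : x ∈ X) (hyx : y ≤ x) :
    ∃ a b c d : P, FormN a b c d := by
  obtain ⟨m, x', hym, hmx', hm, hx'⟩ :=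
    exists_le_covBy_notMem_mem (hB.notMem_of_mem_perp hy) hx hyx
  exact exists_formN_of_covBy hX hB hy hym hmx' hm hx'

end Dacey

theorem exists_N_of_not_dacey {P : Type*} [PartialOrder P] [Fintype P]
    (h : ¬ IsDacey (incomp (P := P))) :
    ∃ a b c d : P, FormN a b c d := by
  simp only [IsDacey, not_forall] at h
  obtain ⟨X, hX, B, hB, hne⟩ := h
  obtain ⟨x, hx, hxBB⟩ : ∃ x ∈ X, x ∉ perp incomp (perp incomp B) :=
    Set.not_subset.mp fun hsub => hne (hsub.antisymm (perp_perp_subset hX hB.1))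
  obtain ⟨y, hy, hxy⟩ : ∃ y ∈ perp incomp B, ¬ incomp x y := by simpa [perp] using hxBB
  rcases not_and_or.mp hxy with hxy | hyx
  · rw [← incomp_orderDual] at hX hB hy
    obtain ⟨a, b, c, d, hN⟩ :=
      exists_formN_of_le (P := Pᵒᵈ) hX hB hy hx (OrderDual.toDual_le_toDual.mpr (not_not.mp hxy))
    exact ⟨_, _, _, _, hN.ofDual⟩
  · exact exists_formN_of_le hX hB hy hx (not_not.mp hyx)
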